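/- Let G be an r-regular simple graph with n vertices and m ≥ 1 edges, and let q_1 ≤ q_2 ≤ … ≤ q_n = 2r be the eigenvalues of Q(G) listed with multiplicity. Then f(λ, G^{+11}) = [(λ-m-2r)(λ-2m-n+2) - mn]·(λ-m-n+2)^{m-1}·∏_{i=1}^{n-1}(λ - m - q_i). -/

import Mathlib

open Classical

/-- The four symbols `0, 1, +, -` used in `xyz`-transformations. -/
inductive XYZ : Type
  | zero | one | plus | minus

namespace XYZ

/-- The relation on the vertices of a graph `H` given by a symbol:
`0` gives the empty graph, `1` the complete graph, `+` the graph itself,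
`-` its complement. -/
def rel {W : Type*} (H : SimpleGraph W) : XYZ → W → W → Prop
  | .zero => fun _ _ => False
  | .one  => fun u v => u ≠ v
  | .plus => fun u v => H.Adj u v
  | .minus => fun u v => u ≠ v ∧ ¬ H.Adj u v

/-- The incidence relation between a vertex and an edge given by a symbol `z`:
`+` means incident, `-` means non-incident, `0` never, `1` always. -/
def inc {W : Type*} (G : SimpleGraph W) : XYZ → W → G.edgeSet → Prop
  | .zero => fun _ _ => False
  | .one  => fun _ _ => True
  | .plus => fun v e => v ∈ (e : Sym2 W)
  | .minus => fun v e => v ∉ (e : Sym2 W)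

theorem rel_symm {W : Type*} (H : SimpleGraph W) (x : XYZ) {u v : W}
    (h : rel H x u v) : rel H x v u := by
  cases x with
  | zero => exact h.elim
  | one => exact (h : u ≠ v).symm
  | plus => exact H.adj_symm h
  | minus => exact ⟨(h.1).symm, fun h' => h.2 (H.adj_symm h')⟩

theorem rel_irrefl {W : Type*} (H : SimpleGraph W) (x : XYZ) {u : W}
    (h : rel H x u u) : False := by
  cases x with
  | zero => exact h
  | one => exact h rfl
  | plus => exact H.ne_of_adj h rfl
  | minus => exact h.1 rfl

end XYZ

/-- The `xyz`-transformation `G^{xyz}` of a graph `G`: its vertex set is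
`V(G) ⊕ E(G)`; two vertices of `G` are adjacent according to the symbol `x`
(applied to `G`), two edges according to the symbol `y` (applied to the line
graph of `G`), and a vertex and an edge according to the symbol `z`
(`+` = incidence graph `B(G)`, `-` = non-incidence graph `B^c(G)`,
`0` = no vertex-edge edges, `1` = all vertex-edge edges). -/
def xyzTransform {V : Type*} (G : SimpleGraph V) (x y z : XYZ) :
    SimpleGraph (V ⊕ G.edgeSet) where
  Adj a b :=
    match a, b with
    | Sum.inl u, Sum.inl v => XYZ.rel G x u v
    | Sum.inr e, Sum.inr f => XYZ.rel G.lineGraph y e f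
    | Sum.inl v, Sum.inr e => XYZ.inc G z v e
    | Sum.inr e, Sum.inl v => XYZ.inc G z v e
  symm := by
    refine ⟨?_⟩
    rintro (u | e) (v | f) h
    · exact XYZ.rel_symm G x h
    · exact h
    · exact h
    · exact XYZ.rel_symm G.lineGraph y h
  loopless := by
    refine ⟨?_⟩
    rintro (u | e) h
    · exact XYZ.rel_irrefl G x h
    · exact XYZ.rel_irrefl G.lineGraph y h

/-- The signless Laplacian matrix `Q(G) = D(G) + A(G)` of a graph. -/
noncomputable def signlessLaplacian {V : Type*} [Fintype V] (G : SimpleGraph V) :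
    Matrix V V ℝ :=
  Matrix.of fun u v =>
    (if u = v then (G.degree u : ℝ) else 0) + (if G.Adj u v then 1 else 0)

/-- The signless Laplacian characteristic polynomial
`f(λ, G) = det (λ I - Q(G))`, evaluated at a real number `λ`. -/
noncomputable def fQ {V : Type*} [Fintype V] (G : SimpleGraph V) (lam : ℝ) : ℝ :=
  Matrix.det (lam • (1 : Matrix V V ℝ) - signlessLaplacian G)


/-! With `J` the all-ones matrices, `λI - Q(G^{+11})` has the block form
`[[(λ - m)I - Q(G), -J], [-J, cI - J]]` with `c = λ - n - m + 2`. The all-ones vector is an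
eigenvector of `cI - J` and of `Q(G)` (eigenvalue `2r`), so a block-unitriangular elimination
turns the determinant into `det((λ - m)I - Q(G) - tJ) · det(cI - J)`, and each factor is a
rank-one perturbation of a matrix whose determinant is known. This needs three linear forms
in `λ` to be nonzero; both sides are polynomial in `λ`, so the identity extends by continuity. -/

open Matrix Finset

namespace Matrix

variable {l m n K : Type*}

def allOnes (m n K : Type*) [One K] : Matrix m n K := of fun _ _ => 1

@[simp]
theorem allOnes_apply [One K] (i : m) (j : n) : allOnes m n K i j = 1 := rfl

theorem allOnes_mul_allOnes [Fintype m] [NonAssocSemiring K] :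
    allOnes l m K * allOnes m n K = (Fintype.card m : K) • allOnes l n K := by
  ext i j
  simp [mul_apply]

theorem mul_allOnes_of_sum_eq [Fintype n] [NonAssocSemiring K] {X : Matrix m n K} {β : K}
    (hX : ∀ i, ∑ j, X i j = β) :
    X * allOnes n l K = β • allOnes m l K := by
  ext i j
  simp [mul_apply, hX]

theorem det_fromBlocks_of_mul_eq [Fintype m] [Fintype n] [DecidableEq m] [DecidableEq n]
    [CommRing K] (A : Matrix m m K) (B : Matrix m n K) (C : Matrix n m K) (D : Matrix n n K)
    (X : Matrix n m K) (hX : D * X = C) :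
    (fromBlocks A B C D).det = (A - B * X).det * D.det := by
  have hfactor : fromBlocks A B C D = fromBlocks (A - B * X) B 0 D * fromBlocks 1 0 X 1 := by
    simp [fromBlocks_multiply, hX]
  rw [hfactor, det_mul, det_fromBlocks_zero₂₁, det_fromBlocks_zero₁₂, det_one, det_one]
  ring

theorem det_one_sub_smul_allOnes [Fintype n] [DecidableEq n] [CommRing K] (s : K) :
    (1 - s • allOnes n n K).det = 1 - s * Fintype.card n := by
  have hrank_one : -s • allOnes n n K =
      replicateCol Unit (fun _ => -s) * replicateRow Unit (fun _ : n => (1 : K)) := by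
    ext i j
    simp [mul_apply]
  rw [sub_eq_add_neg, ← neg_smul, hrank_one, det_one_add_replicateCol_mul_replicateRow]
  simp [dotProduct]
  ring

variable [Fintype n] [DecidableEq n] [Field K]

theorem det_sub_smul_allOnes {X : Matrix n n K} {β : K} (hβ : β ≠ 0)
    (hX : ∀ i, ∑ j, X i j = β) (t : K) :
    (X - t • allOnes n n K).det = X.det * (1 - t * Fintype.card n / β) := by
  have hfactor : X - t • allOnes n n K = X * (1 - (t / β) • allOnes n n K) := by
    rw [Matrix.mul_sub, mul_one, mul_smul_comm, mul_allOnes_of_sum_eq hX, smul_smul,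
      div_mul_cancel₀ t hβ]
  rw [hfactor, det_mul, det_one_sub_smul_allOnes]
  ring

theorem det_smul_one_sub_allOnes [Nonempty n] {c : K} (hc : c ≠ 0) :
    (c • 1 - allOnes n n K).det = c ^ (Fintype.card n - 1) * (c - Fintype.card n) := by
  have := det_sub_smul_allOnes (X := c • (1 : Matrix n n K)) hc
    (by simp [one_apply]) 1
  rw [one_smul] at this
  rw [this, det_smul, det_one, mul_one, ← Nat.sub_one_add_one Fintype.card_ne_zero, pow_succ]
  field_simp
  push_cast
  ring

theorem det_fromBlocks_neg_allOnes [Fintype m] [DecidableEq m] [Nonempty n] {A : Matrix m m K}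
    {β c : K} (hA : ∀ i, ∑ j, A i j = β) (hβ : β ≠ 0) (hc : c ≠ 0)
    (hcn : c ≠ Fintype.card n) :
    β * (fromBlocks A (-allOnes m n K) (-allOnes n m K) (c • 1 - allOnes n n K)).det =
      A.det * c ^ (Fintype.card n - 1) *
        ((c - Fintype.card n) * β - Fintype.card n * Fintype.card m) := by
  have hcn' : c - Fintype.card n ≠ 0 := sub_ne_zero.mpr hcn
  rw [det_fromBlocks_of_mul_eq _ _ _ _ (-(c - Fintype.card n)⁻¹ • allOnes n m K),
    det_smul_one_sub_allOnes hc]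
  · have hcorner : -allOnes m n K * (-(c - Fintype.card n)⁻¹ • allOnes n m K) =
        ((c - Fintype.card n)⁻¹ * Fintype.card n) • allOnes m m K := by
      rw [Matrix.neg_mul, Matrix.mul_smul, allOnes_mul_allOnes, smul_smul]
      simp
    rw [hcorner, det_sub_smul_allOnes hβ hA]
    field_simp
  · rw [Matrix.mul_smul, Matrix.sub_mul, Matrix.smul_mul, Matrix.one_mul, allOnes_mul_allOnes,
      ← sub_smul, smul_smul, neg_mul, inv_mul_cancel₀ hcn', neg_smul, one_smul]

end Matrix

namespace SimpleGraph

variable {V : Type*} (G : SimpleGraph V)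

local notation "G⁺¹¹" => xyzTransform G XYZ.plus XYZ.one XYZ.one

@[simp]
theorem xyzTransform_plus_one_one_adj_inl_inl {u v : V} :
    (G⁺¹¹).Adj (Sum.inl u) (Sum.inl v) ↔ G.Adj u v := Iff.rfl

@[simp]
theorem xyzTransform_plus_one_one_adj_inl_inr {v : V} {e : G.edgeSet} :
    (G⁺¹¹).Adj (Sum.inl v) (Sum.inr e) := trivial

@[simp]
theorem xyzTransform_plus_one_one_adj_inr_inl {e : G.edgeSet} {v : V} :
    (G⁺¹¹).Adj (Sum.inr e) (Sum.inl v) := trivial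

@[simp]
theorem xyzTransform_plus_one_one_adj_inr_inr {e f : G.edgeSet} :
    (G⁺¹¹).Adj (Sum.inr e) (Sum.inr f) ↔ e ≠ f := Iff.rfl

variable [Fintype V]

theorem sum_signlessLaplacian_apply (u : V) :
    ∑ v, signlessLaplacian G u v = 2 * G.degree u := by
  simp only [signlessLaplacian, of_apply, sum_add_distrib, sum_ite_eq, mem_univ, if_true,
    sum_boole]
  rw [← card_neighborFinset_eq_degree, neighborFinset_eq_filter]
  ring

theorem degree_xyzTransform_plus_one_one_inl (v : V) :
    (G⁺¹¹).degree (Sum.inl v) = G.degree v + Fintype.card G.edgeSet := by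
  rw [← card_neighborFinset_eq_degree, neighborFinset_eq_filter, card_filter,
    Fintype.sum_sum_type, ← card_neighborFinset_eq_degree, neighborFinset_eq_filter, card_filter]
  simp

theorem degree_xyzTransform_plus_one_one_inr (e : G.edgeSet) :
    (G⁺¹¹).degree (Sum.inr e) = Fintype.card V + (Fintype.card G.edgeSet - 1) := by
  rw [← card_neighborFinset_eq_degree, neighborFinset_eq_filter, card_filter,
    Fintype.sum_sum_type]
  simp only [xyzTransform_plus_one_one_adj_inr_inl, if_true,
    xyzTransform_plus_one_one_adj_inr_inr, sum_const, card_univ, smul_eq_mul, mul_one]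
  rw [← card_filter, filter_ne, card_erase_of_mem (mem_univ e), card_univ]

theorem signlessLaplacian_xyzTransform_plus_one_one :
    signlessLaplacian (G⁺¹¹) =
      fromBlocks (signlessLaplacian G + (Fintype.card G.edgeSet : ℝ) • 1) (allOnes _ _ ℝ)
        (allOnes _ _ ℝ)
        ((Fintype.card V + Fintype.card G.edgeSet - 2 : ℝ) • 1 + allOnes _ _ ℝ) := by
  ext (u | e) (v | f)
  · by_cases huv : u = v
    · subst huv
      simp [signlessLaplacian, degree_xyzTransform_plus_one_one_inl]
    · simp [signlessLaplacian, huv]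
  · simp [signlessLaplacian]
  · simp [signlessLaplacian]
  · by_cases hef : e = f
    · subst hef
      have hm : 1 ≤ Fintype.card G.edgeSet := Fintype.card_pos_iff.mpr ⟨e⟩
      rw [signlessLaplacian, of_apply, degree_xyzTransform_plus_one_one_inr, Nat.cast_add,
        Nat.cast_sub hm]
      simp
      ring
    · simp [signlessLaplacian, hef]

theorem fQ_xyzTransform_plus_one_one (lam : ℝ) :
    fQ (G⁺¹¹) lam =
      det (fromBlocks ((lam - Fintype.card G.edgeSet) • 1 - signlessLaplacian G)
        (-allOnes V G.edgeSet ℝ) (-allOnes G.edgeSet V ℝ)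
        ((lam - (Fintype.card V + Fintype.card G.edgeSet - 2)) • 1 - allOnes _ _ ℝ)) := by
  rw [fQ, signlessLaplacian_xyzTransform_plus_one_one]
  congr 1
  ext (u | e) (v | f) <;> simp [one_apply] <;> split_ifs <;> ring

theorem sum_smul_one_sub_signlessLaplacian_apply {r : ℕ} (hreg : G.IsRegularOfDegree r)
    (lam : ℝ) (u : V) : ∑ v, (lam • 1 - signlessLaplacian G) u v = lam - 2 * r := by
  simp [sum_sub_distrib, one_apply, sum_signlessLaplacian_apply, hreg u]

theorem mul_fQ_xyzTransform_plus_one_one [Nonempty G.edgeSet] {r : ℕ}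
    (hreg : G.IsRegularOfDegree r) {lam : ℝ}
    (hβ : lam - Fintype.card G.edgeSet - 2 * r ≠ 0)
    (hc : lam - (Fintype.card V + Fintype.card G.edgeSet - 2) ≠ 0)
    (hcm : lam - (Fintype.card V + Fintype.card G.edgeSet - 2) ≠ Fintype.card G.edgeSet) :
    (lam - Fintype.card G.edgeSet - 2 * r) * fQ (G⁺¹¹) lam =
      fQ G (lam - Fintype.card G.edgeSet) *
        (lam - (Fintype.card V + Fintype.card G.edgeSet - 2)) ^ (Fintype.card G.edgeSet - 1) *
        ((lam - (Fintype.card V + Fintype.card G.edgeSet - 2) - Fintype.card G.edgeSet) *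
          (lam - Fintype.card G.edgeSet - 2 * r) - Fintype.card G.edgeSet * Fintype.card V) := by
  rw [fQ_xyzTransform_plus_one_one,
    det_fromBlocks_neg_allOnes (sum_smul_one_sub_signlessLaplacian_apply G hreg _) hβ hc hcm, fQ]

end SimpleGraph

theorem Fin.prod_univ_eq_prod_castLE_mul_last {M : Type*} [CommMonoid M] {n : ℕ} (hn : 0 < n)
    (f : Fin n → M) :
    ∏ i, f i =
      (∏ i : Fin (n - 1), f (Fin.castLE (Nat.sub_le n 1) i)) * f ⟨n - 1, by omega⟩ := by
  obtain ⟨k, rfl⟩ : ∃ k, n = k + 1 := ⟨n - 1, by omega⟩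
  exact Fin.prod_univ_castSucc f

theorem continuous_fQ {V : Type*} [Fintype V] (G : SimpleGraph V) : Continuous (fQ G) := by
  unfold fQ
  fun_prop

theorem signless_charpoly_xyz_p11 {V : Type*} [Fintype V] (G : SimpleGraph V) (r n m : ℕ)
    (hn : Fintype.card V = n) (hm : Fintype.card G.edgeSet = m)
    (hreg : G.IsRegularOfDegree r) (hm1 : 1 ≤ m) (hn0 : 0 < n)
    (q : Fin n → ℝ)
    (hlast : q ⟨n - 1, by omega⟩ = 2 * r)
    (hq : ∀ x : ℝ, fQ G x = ∏ i : Fin n, (x - q i)) :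
    ∀ lam : ℝ,
      fQ (xyzTransform G XYZ.plus XYZ.one XYZ.one) lam =
        ((lam - m - 2 * r) * (lam - 2 * m - n + 2) - m * n) * (lam - m - n + 2) ^ (m - 1) *
          ∏ i : Fin (n - 1), (lam - m - (q (Fin.castLE (Nat.sub_le n 1) i))) := by
  have : Nonempty G.edgeSet := Fintype.card_pos_iff.mp (hm ▸ hm1)
  have hexceptional := Set.toFinite {(m + n - 2 : ℝ), (2 * m + n - 2 : ℝ), (m + 2 * r : ℝ)}
  refine funext_iff.mp (Continuous.ext_on (hexceptional.countable.dense_compl ℝ)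
    (continuous_fQ _) ?_ fun x hx => ?_)
  · fun_prop
  simp only [Set.mem_compl_iff, Set.mem_insert_iff, Set.mem_singleton_iff, not_or] at hx
  obtain ⟨hc, hcm, hβ⟩ := hx
  have hβ' : x - m - 2 * r ≠ 0 := by contrapose! hβ; linarith
  have key := G.mul_fQ_xyzTransform_plus_one_one hreg (lam := x) (by rwa [hm])
    (by rw [hn, hm]; contrapose! hc; linarith) (by rw [hn, hm]; contrapose! hcm; linarith)
  rw [hq, Fin.prod_univ_eq_prod_castLE_mul_last hn0, hlast, hm, hn] at key
  apply mul_left_cancel₀ hβ'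
  rw [key]
  ring
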